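/- Let k ≥ 2 and n = 2^k. With the variable set Vₙ = Fin (n−1) ⊕ Fin k, the models Nₙ = {τᵢ | i ∈ Fin n} where τᵢ (Sum.inl j) = decide (j.val + 1 = i.val) and τᵢ (Sum.inr b) = false, and the projection set Qₙ = {Sum.inl j | j ∈ Fin (n−1), j.val + 1 is not a power of 2}: Qₙ is a UBS of Qₙ in Nₙ, and every UBS U of Qₙ in Nₙ satisfies Qₙ ⊆ U. Consequently, the smallest UBS of Qₙ in Nₙ is Qₙ itself. -/

import Mathlib

/-- The restriction of an assignment `σ : V → Bool` to the subtype of a set `S ⊆ V`. -/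
def restrict {V : Type*} (S : Set V) (σ : V → Bool) : S → Bool := fun x => σ x.val

/-- `S` is an upper bound support (UBS) of `P` in `M`. -/
def IsUBS {V : Type*} (M : Set (V → Bool)) (P S : Set V) : Prop :=
  ∀ σ₁ ∈ M, ∀ σ₂ ∈ M, restrict S σ₁ = restrict S σ₂ → restrict P σ₁ = restrict P σ₂

/-- The `i`-th model of the formula `ψₙ` of Theorem 2: the x-variable `xⱼ` (for
`j ∈ Fin (n-1)`, representing `x_{j+1}`) is true iff `j + 1 = i`, and all the
y-variables are false. -/
def modelτ (k : ℕ) (i : Fin (2 ^ k)) : (Fin (2 ^ k - 1) ⊕ Fin k) → Bool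
  | Sum.inl j => decide (j.val + 1 = i.val)
  | Sum.inr _ => false

/-- The projection set `Qₙ`: the x-variables `x₁, …, x_{n-1}` excluding those whose
index is a power of 2. -/
def Qset (k : ℕ) : Set (Fin (2 ^ k - 1) ⊕ Fin k) :=
  {v | ∃ j : Fin (2 ^ k - 1), (¬ ∃ m : ℕ, j.val + 1 = 2 ^ m) ∧ v = Sum.inl j}

/-! If two models of `M` disagree on exactly one variable `p ∈ P`, then `p` lies in every UBS
of `P` in `M`. The models `τ_{j+1}` and `τ₀` disagree exactly on `x_{j+1}`, so every variable
of `Qₙ` lies in every UBS of `Qₙ`, while `Qₙ` is trivially a UBS of itself. -/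

section General

variable {V : Type*}

theorem restrict_eq_restrict_iff {S : Set V} {σ₁ σ₂ : V → Bool} :
    restrict S σ₁ = restrict S σ₂ ↔ Set.EqOn σ₁ σ₂ S :=
  ⟨fun h x hx => congrFun h ⟨x, hx⟩, fun h => funext fun x => h x.property⟩

theorem isUBS_self (M : Set (V → Bool)) (P : Set V) : IsUBS M P P :=
  fun _ _ _ _ h => h

theorem mem_of_isUBS_of_eqOn_compl {M : Set (V → Bool)} {P U : Set V} (hU : IsUBS M P U)
    {p : V} (hp : p ∈ P) {σ₁ σ₂ : V → Bool} (hσ₁ : σ₁ ∈ M) (hσ₂ : σ₂ ∈ M)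
    (hne : σ₁ p ≠ σ₂ p) (heq : Set.EqOn σ₁ σ₂ {p}ᶜ) : p ∈ U := by
  by_contra hpU
  have hU_eq : Set.EqOn σ₁ σ₂ U := heq.mono fun v hv (hvp : v = p) => hpU (hvp ▸ hv)
  exact hne (restrict_eq_restrict_iff.1 (hU σ₁ hσ₁ σ₂ hσ₂ (restrict_eq_restrict_iff.2 hU_eq)) hp)

end General

section Models

variable {k : ℕ}

/-- The model `τ_{j+1}`; the variable `Sum.inl j` stands for `x_{j+1}`. -/
def modelτSucc (j : Fin (2 ^ k - 1)) : (Fin (2 ^ k - 1) ⊕ Fin k) → Bool :=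
  modelτ k ⟨j.val + 1, by omega⟩

theorem modelτSucc_inl_self (j : Fin (2 ^ k - 1)) :
    modelτSucc j (Sum.inl j) ≠ modelτ k ⟨0, Nat.two_pow_pos k⟩ (Sum.inl j) := by
  simp [modelτSucc, modelτ]

theorem modelτSucc_eqOn_compl (j : Fin (2 ^ k - 1)) :
    Set.EqOn (modelτSucc j) (modelτ k ⟨0, Nat.two_pow_pos k⟩) {Sum.inl j}ᶜ := by
  rintro (j' | b) hv
  · have hj' : j' ≠ j := fun h => hv (congrArg Sum.inl h)
    simp [modelτSucc, modelτ, Fin.val_ne_of_ne hj']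
  · rfl

end Models

theorem smallest_UBS_is_Q_general (k : ℕ) :
    IsUBS (Set.range (modelτ k)) (Qset k) (Qset k) ∧
    ∀ U : Set (Fin (2 ^ k - 1) ⊕ Fin k),
      IsUBS (Set.range (modelτ k)) (Qset k) U → Qset k ⊆ U := by
  refine ⟨isUBS_self _ _, ?_⟩
  rintro U hU _ ⟨j, hj, rfl⟩
  exact mem_of_isUBS_of_eqOn_compl hU ⟨j, hj, rfl⟩ ⟨_, rfl⟩ ⟨_, rfl⟩
    (modelτSucc_inl_self j) (modelτSucc_eqOn_compl j)

theorem smallest_UBS_is_Q (k : ℕ) (hk : 2 ≤ k) :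
    IsUBS (Set.range (modelτ k)) (Qset k) (Qset k) ∧
    ∀ U : Set (Fin (2 ^ k - 1) ⊕ Fin k),
      IsUBS (Set.range (modelτ k)) (Qset k) U → Qset k ⊆ U :=
  smallest_UBS_is_Q_general k
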